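/- arXiv:2303.08668 — 8 statements merged into one kernel-verified Lean document; each statement's English description precedes it below -/
import Mathlib

section
/- Let L be an N×N real symmetric matrix with zero row sums and let C ⊆ {1,...,N} have k ≥ 2 elements. Then the following two statements are equivalent: (1) C is a strong equitable cluster of L, i.e. L_{pj} = L_{qj} for all p, q ∈ C and all j ∉ C; (2) there exists an orthonormal basis v₁, v₂, ..., v_N of ℝ^N consisting of eigenvectors of L, with v₁ = (1/√N)(1,1,...,1)ᵀ, which contains a spectral block of k−1 eigenvectors localized at C. -/
/-!
The subspace `W` of vectors supported on `C` with zero sum over `C` has dimension `k - 1`, and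
its orthogonal complement consists of the vectors constant on `C`. Because `L` is symmetric with
zero column sums, the strong equitable condition is exactly what makes `W` invariant under `L`;
the spectral theorem applied to `W`, to the line through the all-ones vector (an eigenvector
for the eigenvalue `0` lying in `Wᗮ`) and to the orthogonal complement of both then yields the
spectral block. Conversely, expanding `L = ∑ μᵢ vᵢ vᵢᵀ` entrywise, at a position `(p, j)` with
`j ∉ C` only the eigenvectors outside the block contribute, and those do not distinguish `p`
from `q`.
-/

open Matrix Module Module.End

theorem Fintype.exists_equiv_apply_eq {α β : Type*} [Fintype α] [Fintype β] [DecidableEq β]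
    (h : Fintype.card α = Fintype.card β) (a : α) (b : β) : ∃ e : α ≃ β, e a = b :=
  ⟨(equivOfCardEq h).trans (Equiv.swap (equivOfCardEq h a) b), by simp⟩

theorem Module.End.span_singleton_mem_invtSubmodule {R M : Type*} [CommSemiring R]
    [AddCommMonoid M] [Module R M] {f : End R M} {u : M} {μ : R} (hu : f u = μ • u) :
    R ∙ u ∈ invtSubmodule f := by
  rw [mem_invtSubmodule_iff_forall_mem_of_mem]
  intro x hx
  obtain ⟨c, rfl⟩ := Submodule.mem_span_singleton.1 hx
  rw [map_smul, hu, smul_comm]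
  exact Submodule.smul_mem _ _ (Submodule.smul_mem _ _ (Submodule.mem_span_singleton_self u))

section
variable {𝕜 E : Type*} [RCLike 𝕜] [NormedAddCommGroup E] [InnerProductSpace 𝕜 E]

theorem Orthonormal.sumElim {ι κ : Type*} {b : ι → E} {c : κ → E} (hb : Orthonormal 𝕜 b)
    (hc : Orthonormal 𝕜 c) (hbc : ∀ i j, inner 𝕜 (b i) (c j) = 0) :
    Orthonormal 𝕜 (Sum.elim b c) := by
  classical
  rw [orthonormal_iff_ite] at hb hc ⊢
  rintro (i | i) (j | j) <;> simp [hb, hc, hbc, inner_eq_zero_symm.mp (hbc _ _)]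

theorem Submodule.finrank_span_singleton_sup_of_mem_orthogonal {K : Submodule 𝕜 E}
    [FiniteDimensional 𝕜 K] {u : E} (hu : u ≠ 0) (huK : u ∈ Kᗮ) :
    finrank 𝕜 ↥(𝕜 ∙ u ⊔ K) = finrank 𝕜 K + 1 := by
  have hdisj : 𝕜 ∙ u ⊓ K = ⊥ :=
    (K.orthogonal_disjoint.symm.mono_left ((span_singleton_le_iff_mem u _).2 huK)).eq_bot
  have := finrank_sup_add_finrank_inf_eq (𝕜 ∙ u) K
  rw [hdisj, finrank_bot, finrank_span_singleton hu] at this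
  omega

namespace LinearMap.IsSymmetric

variable {T : E →ₗ[𝕜] E}

theorem orthogonal_mem_invtSubmodule (hT : T.IsSymmetric) {K : Submodule 𝕜 E}
    (hK : K ∈ invtSubmodule T) : Kᗮ ∈ invtSubmodule T := by
  intro x hx y hy
  rw [← hT]
  exact hx _ (hK hy)

theorem exists_orthonormal_eigenvectors_of_mem_invtSubmodule (hT : T.IsSymmetric)
    {K : Submodule 𝕜 E} [FiniteDimensional 𝕜 K] (hK : K ∈ invtSubmodule T) :
    ∃ b : Fin (finrank 𝕜 K) → E, Orthonormal 𝕜 b ∧ ∀ a, b a ∈ K ∧ ∃ μ : 𝕜, T (b a) = μ • b a := by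
  have hTK := hT.restrict_invariant ((mem_invtSubmodule_iff_forall_mem_of_mem _).1 hK)
  refine ⟨fun a => hTK.eigenvectorBasis rfl a,
    (hTK.eigenvectorBasis rfl).orthonormal.comp_linearIsometry K.subtypeₗᵢ,
    fun a => ⟨Submodule.coe_mem _, _, congrArg Subtype.val (hTK.apply_eigenvectorBasis rfl a)⟩⟩

theorem exists_orthonormal_eigenvectors_adapted [FiniteDimensional 𝕜 E] (hT : T.IsSymmetric)
    {n : ℕ} (hn : finrank 𝕜 E = n) {K : Submodule 𝕜 E} (hK : K ∈ invtSubmodule T)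
    {u : E} (hu : ‖u‖ = 1) (huK : u ∈ Kᗮ) {μ : 𝕜} (hTu : T u = μ • u) (i₀ : Fin n) :
    ∃ (b : Fin n → E) (S : Finset (Fin n)), Orthonormal 𝕜 b ∧
      (∀ i, ∃ μ : 𝕜, T (b i) = μ • b i) ∧ b i₀ = u ∧ S.card = finrank 𝕜 K ∧ i₀ ∉ S ∧
      (∀ i ∈ S, b i ∈ K) ∧ ∀ i ∉ S, b i ∈ Kᗮ := by
  set R := (𝕜 ∙ u ⊔ K)ᗮ
  have hR : R ∈ invtSubmodule T := hT.orthogonal_mem_invtSubmodule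
    (invtSubmodule.sup_mem (span_singleton_mem_invtSubmodule hTu) hK)
  obtain ⟨bK, hbK, hbK_mem⟩ := hT.exists_orthonormal_eigenvectors_of_mem_invtSubmodule hK
  obtain ⟨bR, hbR, hbR_mem⟩ := hT.exists_orthonormal_eigenvectors_of_mem_invtSubmodule hR
  have hRK : R ≤ Kᗮ := Submodule.orthogonal_le le_sup_right
  have hRu : ∀ x ∈ R, inner 𝕜 u x = 0 := fun x hx =>
    hx u (Submodule.mem_sup_left (Submodule.mem_span_singleton_self u))
  let f : Unit ⊕ (Fin (finrank 𝕜 K) ⊕ Fin (finrank 𝕜 R)) → E :=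
    Sum.elim (fun _ => u) (Sum.elim bK bR)
  have hf : Orthonormal 𝕜 f := by
    refine (orthonormal_subsingleton_iff.2 fun _ => hu).sumElim
      (hbK.sumElim hbR fun a b => hRK (hbR_mem b).1 _ (hbK_mem a).1) ?_
    rintro - (a | a)
    · exact inner_eq_zero_symm.1 (huK _ (hbK_mem a).1)
    · exact hRu _ (hbR_mem a).1
  have hf_eig : ∀ j, ∃ μ : 𝕜, T (f j) = μ • f j := by
    rintro (_ | a | a)
    exacts [⟨μ, hTu⟩, (hbK_mem a).2, (hbR_mem a).2]
  have hf_perp : ∀ j, (∀ a, j ≠ Sum.inr (Sum.inl a)) → f j ∈ Kᗮ := by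
    rintro (_ | a | a) hj
    exacts [huK, (hj a rfl).elim, hRK (hbR_mem a).1]
  have hdim : finrank 𝕜 ↥(𝕜 ∙ u ⊔ K) + finrank 𝕜 R = n :=
    hn ▸ (𝕜 ∙ u ⊔ K).finrank_add_finrank_orthogonal
  rw [Submodule.finrank_span_singleton_sup_of_mem_orthogonal
    (norm_ne_zero_iff.1 (hu.trans_ne one_ne_zero)) huK] at hdim
  obtain ⟨e, he⟩ := Fintype.exists_equiv_apply_eq
    (β := Unit ⊕ (Fin (finrank 𝕜 K) ⊕ Fin (finrank 𝕜 R)))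
    (by simp only [Fintype.card_sum, Fintype.card_unit, Fintype.card_fin]; omega) i₀ (Sum.inl ())
  set S := Finset.univ.image (e.symm ∘ Sum.inr ∘ Sum.inl)
  have hS : ∀ i, i ∈ S ↔ ∃ a, e i = Sum.inr (Sum.inl a) := fun i => by
    simp [S, e.symm_apply_eq, eq_comm]
  refine ⟨f ∘ e, S, hf.comp e e.injective, fun i => hf_eig (e i), by simp [f, he], ?_,
    by simp [hS, he], fun i hi => ?_, fun i hi => hf_perp (e i) fun a ha => hi ((hS i).2 ⟨a, ha⟩)⟩
  · rw [Finset.card_image_of_injective _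
      (e.symm.injective.comp (Sum.inr_injective.comp Sum.inl_injective)), Finset.card_fin]
  · obtain ⟨a, ha⟩ := (hS i).1 hi
    simpa [f, ha] using (hbK_mem a).1

end LinearMap.IsSymmetric
end

theorem Matrix.apply_eq_sum_of_orthonormal_eigenvectors {R n : Type*} [CommRing R] [Fintype n]
    [DecidableEq n] {L : Matrix n n R} {v : n → n → R} {μ : n → R}
    (hv : ∀ i j, v i ⬝ᵥ v j = if i = j then 1 else 0) (hLv : ∀ i, L *ᵥ v i = μ i • v i)
    (p j : n) : L p j = ∑ i, μ i * v i p * v i j := by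
  have hVV : of v * (of v)ᵀ = 1 := by
    ext i j
    simpa [mul_apply, one_apply, dotProduct] using hv i j
  have hLV : ∀ i, (L * (of v)ᵀ) p i = μ i * v i p := fun i => by
    simpa [mulVec, dotProduct, mul_apply] using congrFun (hLv i) p
  calc L p j = (L * (of v)ᵀ * of v) p j := by
        rw [Matrix.mul_assoc, mul_eq_one_comm.1 hVV, Matrix.mul_one]
    _ = ∑ i, μ i * v i p * v i j := by simp only [mul_apply (M := L * _), hLV, of_apply]

section ClusterSubspace

variable {ι : Type*} (C : Finset ι)

noncomputable def clusterConstraints : EuclideanSpace ℝ ι →ₗ[ℝ] ({j // j ∉ C} → ℝ) × ℝ :=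
  (LinearMap.pi fun j : {j // j ∉ C} => (EuclideanSpace.proj j.1).toLinearMap).prod
    (∑ i ∈ C, (EuclideanSpace.proj i).toLinearMap)

noncomputable def clusterSubspace : Submodule ℝ (EuclideanSpace ℝ ι) :=
  LinearMap.ker (clusterConstraints C)

variable {C}

theorem mem_clusterSubspace {x : EuclideanSpace ℝ ι} :
    x ∈ clusterSubspace C ↔ (∀ j ∉ C, x j = 0) ∧ ∑ i ∈ C, x i = 0 := by
  simp [clusterSubspace, clusterConstraints, funext_iff]

theorem finrank_clusterSubspace [Fintype ι] [DecidableEq ι] (hC : C.Nonempty) :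
    finrank ℝ (clusterSubspace C) = C.card - 1 := by
  obtain ⟨p, hp⟩ := hC
  have hsurj : Function.Surjective (clusterConstraints C) := by
    rintro ⟨g, s⟩
    refine ⟨WithLp.toLp 2 fun j => if h : j ∈ C then (if j = p then s else 0) else g ⟨j, h⟩, ?_⟩
    ext j
    · simp [clusterConstraints, j.2]
    · simp +contextual [clusterConstraints, hp]
  have hrank := LinearMap.finrank_range_add_finrank_ker (clusterConstraints C)
  rw [LinearMap.range_eq_top.2 hsurj, finrank_top, finrank_prod, finrank_pi, finrank_self,
    finrank_euclideanSpace, Fintype.card_subtype_compl, Fintype.card_coe] at hrank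
  have := C.card_le_univ
  have := C.card_pos.2 ⟨p, hp⟩
  rw [clusterSubspace]
  omega

theorem sum_mul_eq_zero_of_mem_clusterSubspace [Fintype ι] {x : EuclideanSpace ℝ ι}
    (hx : x ∈ clusterSubspace C) {g : ι → ℝ} (hg : ∀ p ∈ C, ∀ q ∈ C, g p = g q) :
    ∑ r, g r * x r = 0 := by
  rw [mem_clusterSubspace] at hx
  rw [← Finset.sum_subset C.subset_univ fun r _ hr => by rw [hx.1 r hr, mul_zero]]
  rcases C.eq_empty_or_nonempty with rfl | ⟨q, hq⟩
  · simp
  · rw [Finset.sum_congr rfl fun r hr => by rw [hg r hr q hq], ← Finset.mul_sum, hx.2, mul_zero]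

theorem apply_eq_of_mem_orthogonal_clusterSubspace [Fintype ι] [DecidableEq ι]
    {x : EuclideanSpace ℝ ι} (hx : x ∈ (clusterSubspace C)ᗮ) {p q : ι} (hp : p ∈ C) (hq : q ∈ C) : x p = x q := by
  have hw : EuclideanSpace.single p (1 : ℝ) - EuclideanSpace.single q 1 ∈ clusterSubspace C := by
    rw [mem_clusterSubspace]
    refine ⟨fun j hj => ?_, ?_⟩
    · simp [(ne_of_mem_of_not_mem hp hj).symm, (ne_of_mem_of_not_mem hq hj).symm]
    · simp [PiLp.single_apply, Finset.sum_sub_distrib, hp, hq]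
  have := hx _ hw
  rw [inner_sub_left, EuclideanSpace.inner_single_left, EuclideanSpace.inner_single_left] at this
  simpa [sub_eq_zero] using this

theorem clusterSubspace_mem_invtSubmodule [Fintype ι] [DecidableEq ι] (L : Matrix ι ι ℝ)
    (hcol : ∀ r, ∑ j, L j r = 0)
    (hL : ∀ j ∉ C, ∀ p ∈ C, ∀ q ∈ C, L j p = L j q) :
    clusterSubspace C ∈ invtSubmodule L.toEuclideanLin := by
  rw [mem_invtSubmodule_iff_forall_mem_of_mem]
  intro x hx
  have hout : ∀ j ∉ C, L.toEuclideanLin x j = 0 := fun j hj =>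
    sum_mul_eq_zero_of_mem_clusterSubspace hx (hL j hj)
  have htotal : ∑ j, L.toEuclideanLin x j = 0 := by
    simp only [toLpLin_apply, mulVec, dotProduct]
    rw [Finset.sum_comm]
    simp [← Finset.sum_mul, hcol]
  refine mem_clusterSubspace.2 ⟨hout, ?_⟩
  rwa [Finset.sum_subset C.subset_univ fun j _ hj => hout j hj]

end ClusterSubspace

def Matrix.IsStrongEquitableCluster {ι : Type*} (L : Matrix ι ι ℝ) (C : Finset ι) : Prop :=
  ∀ p ∈ C, ∀ q ∈ C, ∀ j ∉ C, L p j = L q j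

theorem norm_toLp_const_inv_sqrt (N : ℕ) [NeZero N] :
    ‖WithLp.toLp 2 (fun _ : Fin N => 1 / √N)‖ = 1 := by
  rw [EuclideanSpace.norm_eq]
  simp [Real.sq_sqrt (Nat.cast_nonneg N), NeZero.ne]

theorem Matrix.IsStrongEquitableCluster.exists_spectral_block {N : ℕ} [NeZero N]
    {L : Matrix (Fin N) (Fin N) ℝ} {C : Finset (Fin N)} (hC : L.IsStrongEquitableCluster C)
    (hsym : L.IsSymm) (hrow : ∀ i, ∑ j, L i j = 0) (hne : C.Nonempty) :
    ∃ (v : Fin N → (Fin N → ℝ)) (μ : Fin N → ℝ) (S : Finset (Fin N)),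
      (∀ i j, v i ⬝ᵥ v j = if i = j then 1 else 0) ∧
      (∀ i, L.mulVec (v i) = μ i • v i) ∧
      (v 0 = fun _ => 1 / Real.sqrt N) ∧
      S.card = C.card - 1 ∧ (0 : Fin N) ∉ S ∧
      (∀ i ∈ S, ∀ j ∉ C, v i j = 0) ∧
      (∀ i ∉ S, ∀ p ∈ C, ∀ q ∈ C, v i p = v i q) := by
  have hT : L.toEuclideanLin.IsSymmetric :=
    isSymmetric_toEuclideanLin_iff.2 (isHermitian_iff_isSymm.2 hsym)
  have hW : clusterSubspace C ∈ invtSubmodule L.toEuclideanLin := by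
    refine clusterSubspace_mem_invtSubmodule L (fun r => by simpa only [hsym.apply] using hrow r)
      fun j hj p hp q hq => ?_
    rw [hsym.apply p j, hsym.apply q j]
    exact hC p hp q hq j hj
  set u : EuclideanSpace ℝ (Fin N) := WithLp.toLp 2 fun _ => 1 / √N
  have huW : u ∈ (clusterSubspace C)ᗮ := fun w hw => by
    simpa [u, EuclideanSpace.inner_eq_star_dotProduct, dotProduct] using
      sum_mul_eq_zero_of_mem_clusterSubspace hw (g := fun _ => 1 / √N) fun _ _ _ _ => rfl
  have hTu : L.toEuclideanLin u = (0 : ℝ) • u := by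
    ext i
    simp [u, toLpLin_apply, mulVec, dotProduct, ← Finset.sum_mul, hrow]
  obtain ⟨b, S, hb, hb_eig, hb0, hS_card, hS0, hS, hSc⟩ :=
    hT.exists_orthonormal_eigenvectors_adapted finrank_euclideanSpace_fin hW
      (norm_toLp_const_inv_sqrt N) huW hTu 0
  choose μ hμ using hb_eig
  refine ⟨fun i => WithLp.ofLp (b i), μ, S, fun i j => ?_, fun i => congrArg WithLp.ofLp (hμ i),
    congrArg WithLp.ofLp hb0, hS_card.trans (finrank_clusterSubspace hne), hS0,
    fun i hi => (mem_clusterSubspace.1 (hS i hi)).1,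
    fun i hi p hp q hq => apply_eq_of_mem_orthogonal_clusterSubspace (hSc i hi) hp hq⟩
  rw [dotProduct_comm]
  exact orthonormal_iff_ite.1 hb i j

theorem Matrix.isStrongEquitableCluster_of_localized_eigenvectors {ι : Type*} [Fintype ι]
    [DecidableEq ι] {L : Matrix ι ι ℝ} {C : Finset ι} {v : ι → ι → ℝ} {μ : ι → ℝ}
    {S : Finset ι} (hv : ∀ i j, v i ⬝ᵥ v j = if i = j then 1 else 0)
    (hLv : ∀ i, L *ᵥ v i = μ i • v i) (hS : ∀ i ∈ S, ∀ j ∉ C, v i j = 0)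
    (hSc : ∀ i ∉ S, ∀ p ∈ C, ∀ q ∈ C, v i p = v i q) : L.IsStrongEquitableCluster C := by
  intro p hp q hq j hj
  simp only [apply_eq_sum_of_orthonormal_eigenvectors hv hLv]
  refine Finset.sum_congr rfl fun i _ => ?_
  by_cases hi : i ∈ S
  · simp [hS i hi j hj]
  · rw [hSc i hi p hp q hq]

/-- For an N×N real symmetric matrix L with zero row sums and a subset
C of the indices with k ≥ 2 elements, C is a strong equitable cluster of L iff there
is an orthonormal eigenbasis v₀,...,v_{N-1} of L with v₀ = (1/√N)(1,...,1)ᵀ containing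
a spectral block of k−1 eigenvectors localized at C. -/
theorem strong_equitable_cluster_iff_spectral_block
    (N : ℕ) [NeZero N] (L : Matrix (Fin N) (Fin N) ℝ)
    (hsym : L.IsSymm) (hrow : ∀ i, ∑ j, L i j = 0)
    (C : Finset (Fin N)) (hk : 2 ≤ C.card) :
    (∀ p ∈ C, ∀ q ∈ C, ∀ j ∉ C, L p j = L q j) ↔
    ∃ (v : Fin N → (Fin N → ℝ)) (μ : Fin N → ℝ) (S : Finset (Fin N)),
      -- v is an orthonormal basis of ℝ^N ...
      (∀ i j, v i ⬝ᵥ v j = if i = j then 1 else 0) ∧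
      -- ... consisting of eigenvectors of L ...
      (∀ i, L.mulVec (v i) = μ i • v i) ∧
      -- ... with the first eigenvector the constant vector (1/√N)(1,...,1)ᵀ ...
      (v 0 = fun _ => 1 / Real.sqrt N) ∧
      -- ... containing a spectral block S of k−1 eigenvectors (not including v₀)
      S.card = C.card - 1 ∧ (0 : Fin N) ∉ S ∧
      -- localized at C: eigenvectors in S vanish outside C ...
      (∀ i ∈ S, ∀ j ∉ C, v i j = 0) ∧
      -- ... and eigenvectors not in S are constant on C
      (∀ i ∉ S, ∀ p ∈ C, ∀ q ∈ C, v i p = v i q) :=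
  ⟨fun hC => IsStrongEquitableCluster.exists_spectral_block hC hsym hrow
      (C.card_pos.1 (by omega)),
    fun ⟨_, _, _, hv, hLv, _, _, _, hS, hSc⟩ =>
      isStrongEquitableCluster_of_localized_eigenvectors hv hLv hS hSc⟩
end

section
/- Let L be an N×N real symmetric matrix with zero row sums and let C ⊆ {1,...,N} be a strong equitable cluster of L with k ≥ 2 elements. Then L admits k−1 pairwise orthonormal eigenvectors u₂, ..., u_k such that each u_i has all entries at positions outside C equal to zero and the entries of each u_i sum to zero. -/
/-!
Let `V` be the space of vectors supported on `C` with zero entry sum; it has dimension `k - 1`.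
`V` is invariant under `L`: for `j ∉ C`, symmetry and the SEC condition make row `j` of `L`
constant on `C`, so it annihilates `V`, while the zero column sums of `L` preserve the zero entry
sum. The spectral theorem for the restriction of `L` to `V` gives the eigenvectors.
-/

open Matrix

section SupportedSumZero

variable (R : Type*) {ι : Type*} [CommSemiring R] [Fintype ι] (C : Finset ι)

def supportedSumZero : Submodule R (ι → R) where
  carrier := {x | (∀ j ∉ C, x j = 0) ∧ ∑ j, x j = 0}
  add_mem' := by
    rintro x y ⟨hxC, hx⟩ ⟨hyC, hy⟩
    exact ⟨fun j hj => by simp [hxC j hj, hyC j hj], by simp [Finset.sum_add_distrib, hx, hy]⟩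
  zero_mem' := ⟨fun _ _ => rfl, by simp⟩
  smul_mem' := by
    rintro c x ⟨hxC, hx⟩
    exact ⟨fun j hj => by simp [hxC j hj], by simp [← Finset.mul_sum, hx]⟩

variable {R C}

theorem sum_eq_zero_of_mem_supportedSumZero {x : ι → R} (hx : x ∈ supportedSumZero R C) :
    ∑ j ∈ C, x j = 0 := by
  rw [Finset.sum_subset C.subset_univ fun j _ hj => hx.1 j hj]
  exact hx.2

end SupportedSumZero

section Finrank

variable {K ι : Type*} [Field K] [Fintype ι] (C : Finset ι)

theorem Fintype.mem_ker_linearCombination_one {α : Type*} [Fintype α] {y : α → K} :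
    y ∈ LinearMap.ker (Fintype.linearCombination K fun _ : α => (1 : K)) ↔ ∑ a, y a = 0 := by
  simp [Fintype.linearCombination_apply]

open Classical in
noncomputable def supportedSumZeroEquivKer :
    supportedSumZero K C ≃ₗ[K]
      LinearMap.ker (Fintype.linearCombination K fun _ : C => (1 : K)) where
  toFun x := ⟨fun c => x.1 c, by
    rw [Fintype.mem_ker_linearCombination_one, Finset.sum_coe_sort C (x.1 ·)]
    exact sum_eq_zero_of_mem_supportedSumZero x.2⟩
  invFun y := ⟨fun j => if h : j ∈ C then y.1 ⟨j, h⟩ else 0, fun j hj => dif_neg hj, by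
    rw [← Finset.sum_subset C.subset_univ fun j _ hj => dif_neg hj,
      Finset.sum_dite_of_true fun _ h => h]
    exact Fintype.mem_ker_linearCombination_one.mp y.2⟩
  map_add' _ _ := rfl
  map_smul' _ _ := rfl
  left_inv x := by
    ext j
    by_cases h : j ∈ C <;> simp [h, x.2.1 j]
  right_inv y := by
    ext c
    simp

theorem finrank_supportedSumZero : Module.finrank K (supportedSumZero K C) = C.card - 1 := by
  rw [(supportedSumZeroEquivKer C).finrank_eq]
  rcases C.eq_empty_or_nonempty with rfl | ⟨c, hc⟩
  · simpa using Submodule.finrank_le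
      (LinearMap.ker (Fintype.linearCombination K fun _ : (∅ : Finset ι) => (1 : K)))
  · classical
    have hf : Fintype.linearCombination K (fun _ : C => (1 : K)) ≠ 0 := fun h => by
      simpa using LinearMap.congr_fun h (Pi.single ⟨c, hc⟩ 1)
    have := Module.Dual.finrank_ker_add_one_of_ne_zero hf
    simp only [Module.finrank_fintype_fun_eq_card, Fintype.card_coe] at this
    omega

end Finrank

section Invariance

variable {R ι : Type*} [CommSemiring R] [Fintype ι] {C : Finset ι} {L : Matrix ι ι R}

theorem Matrix.sum_mulVec_eq_zero_of_isSymm (hsym : L.IsSymm) (hrow : ∀ i, ∑ j, L i j = 0)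
    (x : ι → R) : ∑ i, (L *ᵥ x) i = 0 := by
  simp only [mulVec, dotProduct]
  rw [Finset.sum_comm]
  simp [← Finset.sum_mul, ← hsym.apply, hrow]

theorem Matrix.mulVec_apply_eq_zero_of_mem_supportedSumZero {x : ι → R}
    (hx : x ∈ supportedSumZero R C) {j : ι} (hj : ∀ p ∈ C, ∀ q ∈ C, L j p = L j q) :
    (L *ᵥ x) j = 0 := by
  have hsupp : (L *ᵥ x) j = ∑ p ∈ C, L j p * x p :=
    (Finset.sum_subset C.subset_univ fun p _ hp => by simp [hx.1 p hp]).symm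
  rcases C.eq_empty_or_nonempty with rfl | ⟨q, hq⟩
  · simpa using hsupp
  · rw [hsupp, Finset.sum_congr rfl fun p hp => by rw [hj p hp q hq], ← Finset.mul_sum,
      sum_eq_zero_of_mem_supportedSumZero hx, mul_zero]

theorem Matrix.mulVec_mem_supportedSumZero (hsym : L.IsSymm) (hrow : ∀ i, ∑ j, L i j = 0)
    (hSEC : ∀ p ∈ C, ∀ q ∈ C, ∀ j ∉ C, L p j = L q j) {x : ι → R}
    (hx : x ∈ supportedSumZero R C) : L *ᵥ x ∈ supportedSumZero R C :=
  ⟨fun j hj => mulVec_apply_eq_zero_of_mem_supportedSumZero hx fun p hp q hq => by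
      rw [hsym.apply p j, hsym.apply q j, hSEC p hp q hq j hj],
    sum_mulVec_eq_zero_of_isSymm hsym hrow x⟩

end Invariance

theorem LinearMap.IsSymmetric.exists_orthonormal_eigenvectors_mem {𝕜 E : Type*} [RCLike 𝕜]
    [NormedAddCommGroup E] [InnerProductSpace 𝕜 E] [FiniteDimensional 𝕜 E]
    {T : E →ₗ[𝕜] E} (hT : T.IsSymmetric) {V : Submodule 𝕜 E} (hV : ∀ x ∈ V, T x ∈ V) {n : ℕ}
    (hn : Module.finrank 𝕜 V = n) :
    ∃ (v : Fin n → E) (μ : Fin n → ℝ),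
      Orthonormal 𝕜 v ∧ (∀ a, T (v a) = (μ a : 𝕜) • v a) ∧ ∀ a, v a ∈ V := by
  have hTV := hT.restrict_invariant hV
  exact ⟨fun a => hTV.eigenvectorBasis hn a, hTV.eigenvalues hn,
    (hTV.eigenvectorBasis hn).orthonormal.comp_linearIsometry V.subtypeₗᵢ,
    fun a => congrArg Subtype.val (hTV.apply_eigenvectorBasis hn a),
    fun a => (hTV.eigenvectorBasis hn a).2⟩

theorem sec_admits_orthonormal_localized_eigenvectors_general
    (N : ℕ) (L : Matrix (Fin N) (Fin N) ℝ)
    (hsym : L.IsSymm) (hrow : ∀ i, ∑ j, L i j = 0)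
    (C : Finset (Fin N))
    (hSEC : ∀ p ∈ C, ∀ q ∈ C, ∀ j ∉ C, L p j = L q j) :
    ∃ (u : Fin (C.card - 1) → (Fin N → ℝ)) (μ : Fin (C.card - 1) → ℝ),
      (∀ a b, u a ⬝ᵥ u b = if a = b then 1 else 0) ∧
      (∀ a, L.mulVec (u a) = μ a • u a) ∧
      (∀ a, ∀ j ∉ C, u a j = 0) ∧
      (∀ a, ∑ j, u a j = 0) := by
  set V := (supportedSumZero ℝ C).comap (WithLp.linearEquiv 2 ℝ (Fin N → ℝ)).toLinearMap
    with hVdef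
  have hV : ∀ x ∈ V, L.toEuclideanLin x ∈ V := fun _ hx =>
    L.mulVec_mem_supportedSumZero hsym hrow hSEC hx
  have hn : Module.finrank ℝ V = C.card - 1 := by
    rw [hVdef, Submodule.comap_equiv_eq_map_symm, LinearEquiv.finrank_map_eq,
      finrank_supportedSumZero]
  have hL : L.toEuclideanLin.IsSymmetric :=
    isSymmetric_toEuclideanLin_iff.mpr (isHermitian_iff_isSymm.mpr hsym)
  obtain ⟨v, μ, hv, hvμ, hvV⟩ := hL.exists_orthonormal_eigenvectors_mem hV hn
  refine ⟨fun a => WithLp.ofLp (v a), μ, fun a b => ?_, fun a => congrArg WithLp.ofLp (hvμ a),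
    fun a => (hvV a).1, fun a => (hvV a).2⟩
  simpa [EuclideanSpace.inner_eq_star_dotProduct, dotProduct_comm] using
    orthonormal_iff_ite.mp hv a b

/-- If C is a strong equitable cluster with k ≥ 2 elements of an N×N real
symmetric matrix L with zero row sums, then L admits k−1 pairwise orthonormal
eigenvectors, each supported on C and with entries summing to zero. -/
theorem sec_admits_orthonormal_localized_eigenvectors
    (N : ℕ) (L : Matrix (Fin N) (Fin N) ℝ)
    (hsym : L.IsSymm) (hrow : ∀ i, ∑ j, L i j = 0)
    (C : Finset (Fin N)) (hk : 2 ≤ C.card)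
    (hSEC : ∀ p ∈ C, ∀ q ∈ C, ∀ j ∉ C, L p j = L q j) :
    ∃ (u : Fin (C.card - 1) → (Fin N → ℝ)) (μ : Fin (C.card - 1) → ℝ),
      (∀ a b, u a ⬝ᵥ u b = if a = b then 1 else 0) ∧
      (∀ a, L.mulVec (u a) = μ a • u a) ∧
      (∀ a, ∀ j ∉ C, u a j = 0) ∧
      (∀ a, ∑ j, u a j = 0) :=
  sec_admits_orthonormal_localized_eigenvectors_general N L hsym hrow C hSEC
end

section
/- Let L be an N×N real symmetric matrix with zero row sums and let C ⊆ {1,...,N} be a strong equitable cluster of L. Then the subspace U = { u ∈ ℝ^N : u_j = 0 for every j ∉ C, and Σ_{i=1}^N u_i = 0 } is invariant under L, i.e. Lu ∈ U for every u ∈ U. -/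
/-!
Outside `C`, the `j`-th row of `L` restricted to `C` is constant (by symmetry and the SEC
condition), so `(L u)_j` is that constant times `∑_{i ∈ C} u_i = 0`. The total sum of `L u` vanishes
because symmetry turns the zero row sums into zero column sums.
-/

open Finset Matrix

theorem Finset.sum_mul_eq_zero_of_forall_eq {ι R : Type*} [NonUnitalNonAssocSemiring R]
    {s : Finset ι} {f u : ι → R} (hf : ∀ p ∈ s, ∀ q ∈ s, f p = f q)
    (hu : ∑ i ∈ s, u i = 0) : ∑ i ∈ s, f i * u i = 0 := by
  rcases s.eq_empty_or_nonempty with rfl | ⟨p, hp⟩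
  · exact sum_empty
  · rw [sum_congr rfl fun i hi => by rw [hf i hi p hp], ← mul_sum, hu, mul_zero]

namespace Matrix

variable {n R : Type*} [Fintype n]

theorem mulVec_apply_eq_zero_of_row_const [NonUnitalNonAssocSemiring R] {A : Matrix n n R}
    {C : Finset n} {u : n → R} (hsupp : ∀ i ∉ C, u i = 0) (hsum : ∑ i, u i = 0) {j : n}
    (hrow : ∀ p ∈ C, ∀ q ∈ C, A j p = A j q) : (A *ᵥ u) j = 0 := by
  have hsub {f : n → R} (hf : ∀ i ∉ C, f i = 0) : ∑ i ∈ C, f i = ∑ i, f i :=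
    sum_subset (subset_univ C) fun i _ hi => hf i hi
  rw [mulVec, dotProduct, ← hsub fun i hi => by rw [hsupp i hi, mul_zero]]
  exact sum_mul_eq_zero_of_forall_eq hrow ((hsub hsupp).trans hsum)

theorem sum_mulVec_eq_zero_of_isSymm_s2 [CommSemiring R] {A : Matrix n n R} (hA : A.IsSymm)
    (hrow : ∀ i, ∑ j, A i j = 0) (u : n → R) : ∑ i, (A *ᵥ u) i = 0 := by
  have hcol : 1 ᵥ* A = 0 := by
    calc 1 ᵥ* A = 1 ᵥ* Aᵀ := by rw [hA.eq]
      _ = A *ᵥ 1 := vecMul_transpose A 1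
      _ = 0 := funext fun i => (dotProduct_one (A i)).trans (hrow i)
  rw [← one_dotProduct, dotProduct_mulVec, hcol, zero_dotProduct]

end Matrix

theorem sec_subspace_invariant_general
    (N : ℕ) (L : Matrix (Fin N) (Fin N) ℝ)
    (hsym : L.IsSymm) (hrow : ∀ i, ∑ j, L i j = 0)
    (C : Finset (Fin N))
    (hSEC : ∀ p ∈ C, ∀ q ∈ C, ∀ j ∉ C, L p j = L q j) :
    ∀ u : Fin N → ℝ, (∀ j ∉ C, u j = 0) → (∑ i, u i = 0) →
      (∀ j ∉ C, L.mulVec u j = 0) ∧ (∑ i, L.mulVec u i = 0) := by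
  intro u hsupp hsum
  refine ⟨fun j hj => mulVec_apply_eq_zero_of_row_const hsupp hsum fun p hp q hq => ?_,
    sum_mulVec_eq_zero_of_isSymm_s2 hsym hrow u⟩
  rw [hsym.apply p j, hsym.apply q j]
  exact hSEC p hp q hq j hj

/-- If C is a strong equitable cluster of an N×N real symmetric matrix L
with zero row sums, the subspace U = {u : u_j = 0 for j ∉ C, ∑ u_i = 0} is L-invariant. -/
theorem sec_subspace_invariant
    (N : ℕ) (L : Matrix (Fin N) (Fin N) ℝ)
    (hsym : L.IsSymm) (hrow : ∀ i, ∑ j, L i j = 0)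
    (C : Finset (Fin N)) (hk : 2 ≤ C.card)
    (hSEC : ∀ p ∈ C, ∀ q ∈ C, ∀ j ∉ C, L p j = L q j) :
    ∀ u : Fin N → ℝ, (∀ j ∉ C, u j = 0) → (∑ i, u i = 0) →
      (∀ j ∉ C, L.mulVec u j = 0) ∧ (∑ i, L.mulVec u i = 0) :=
  sec_subspace_invariant_general N L hsym hrow C hSEC
end

section
/- Let L be an N×N real symmetric matrix with zero row sums, let C ⊆ {1,...,N} be a strong equitable cluster of L, and let L' be the k×k principal submatrix of L formed by the rows and columns indexed by C. Then for every u ∈ U, with u' ∈ ℝ^k denoting the restriction of u to the positions in C, and every λ ∈ ℝ, one has Lu = λu if and only if L'u' = λu'. -/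
/-!
Outside the cluster, symmetry turns the SEC condition into: row `j ∉ C` of `L` is constant on
`C`. Since `u` is supported on `C` with zero sum, `(L u)_j = 0 = λ u_j` for every `j ∉ C`, so the
eigenvalue equation for `L` reduces to its rows in `C`, which are exactly those of `L' u'`.
-/

open Finset Matrix

namespace Matrix

variable {ι R : Type*} [Fintype ι] [NonUnitalNonAssocSemiring R]
  {L : Matrix ι ι R} {C : Finset ι} {u : ι → R}

theorem mulVec_apply_eq_sum_of_support_subset (hu : ∀ j ∉ C, u j = 0) (i : ι) :
    (L *ᵥ u) i = ∑ j ∈ C, L i j * u j :=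
  (sum_subset (subset_univ C) fun j _ hj => by rw [hu j hj, mul_zero]).symm

theorem submatrix_mulVec_restrict_apply (hu : ∀ j ∉ C, u j = 0) (p : C) :
    (L.submatrix (↑) (↑) *ᵥ fun q : C => u q) p = (L *ᵥ u) p := by
  rw [mulVec_apply_eq_sum_of_support_subset hu, ← sum_coe_sort C]
  rfl

theorem mulVec_apply_eq_zero_of_notMem (hL : L.IsSymm)
    (hC : ∀ p ∈ C, ∀ q ∈ C, ∀ j ∉ C, L p j = L q j)
    (hu : ∀ j ∉ C, u j = 0) (hsum : ∑ i, u i = 0) {j : ι} (hj : j ∉ C) :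
    (L *ᵥ u) j = 0 := by
  have hsumC : ∑ i ∈ C, u i = 0 := by
    rwa [sum_subset (subset_univ C) fun i _ hi => hu i hi]
  rw [mulVec_apply_eq_sum_of_support_subset hu]
  refine sum_mul_eq_zero_of_forall_eq (fun p hp q hq => ?_) hsumC
  rw [hL.apply p j, hL.apply q j, hC p hp q hq j hj]

end Matrix

theorem sec_eigen_iff_principal_submatrix_eigen_general
    (N : ℕ) (L : Matrix (Fin N) (Fin N) ℝ)
    (hsym : L.IsSymm)
    (C : Finset (Fin N))
    (hSEC : ∀ p ∈ C, ∀ q ∈ C, ∀ j ∉ C, L p j = L q j)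
    (u : Fin N → ℝ) (hu0 : ∀ j ∉ C, u j = 0) (husum : ∑ i, u i = 0)
    (lam : ℝ) :
    L.mulVec u = lam • u ↔
      (Matrix.of fun p q : {i // i ∈ C} => L p q).mulVec (fun p : {i // i ∈ C} => u p)
        = lam • (fun p : {i // i ∈ C} => u p) := by
  have hres : ∀ p : C, ((Matrix.of fun p q : C => L p q) *ᵥ fun q : C => u q) p = (L *ᵥ u) p :=
    submatrix_mulVec_restrict_apply hu0
  constructor
  · intro h
    funext p
    rw [hres p, h]
    rfl
  · intro h
    funext j
    by_cases hj : j ∈ C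
    · simpa [hres] using congrFun h ⟨j, hj⟩
    · simp [mulVec_apply_eq_zero_of_notMem hsym hSEC hu0 husum hj, hu0 j hj]

/-- For a strong equitable cluster C of an N×N real symmetric matrix L
with zero row sums, a vector u in the subspace U (supported in C, entries summing to
zero) is a λ-eigenvector of L iff its restriction u' to C is a λ-eigenvector of the
principal submatrix L' of L indexed by C. -/
theorem sec_eigen_iff_principal_submatrix_eigen
    (N : ℕ) (L : Matrix (Fin N) (Fin N) ℝ)
    (hsym : L.IsSymm) (hrow : ∀ i, ∑ j, L i j = 0)
    (C : Finset (Fin N)) (hk : 2 ≤ C.card)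
    (hSEC : ∀ p ∈ C, ∀ q ∈ C, ∀ j ∉ C, L p j = L q j)
    (u : Fin N → ℝ) (hu0 : ∀ j ∉ C, u j = 0) (husum : ∑ i, u i = 0)
    (lam : ℝ) :
    L.mulVec u = lam • u ↔
      (Matrix.of fun p q : {i // i ∈ C} => L p q).mulVec (fun p : {i // i ∈ C} => u p)
        = lam • (fun p : {i // i ∈ C} => u p) :=
  sec_eigen_iff_principal_submatrix_eigen_general N L hsym C hSEC u hu0 husum lam
end

section
/- Let L be an N×N real symmetric matrix with zero row sums, let C ⊆ {1,...,N} be a strong equitable cluster of L with common external degree d (so that Σ_{j∈C} L_{ij} = d for every i ∈ C), let L' be the principal submatrix of L indexed by C, and set L₀ := L' − d·I_k. Then for every λ ∈ ℝ: L has a nonzero eigenvector lying in U with eigenvalue λ if and only if L₀ has a nonzero eigenvector with eigenvalue λ − d whose entries sum to zero. In particular, the eigenvalues of L associated to the cluster C depend only on the subgraph induced by C and on the external degree d. -/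
/-! For `u` supported on `C`, the entries of `L u` at `p ∈ C` are those of `L' u|_C`. For
`i ∉ C`, symmetry and the strong equitable condition make row `i` of `L` constant on `C`, so
`(L u)_i` is a multiple of `∑ u = 0`. Hence `L u = λ u` iff `L' w = λ w` for the restriction
`w = u|_C`, i.e. `L₀ w = (λ - d) w`. -/

open Matrix

section Restrict

variable {ι R : Type*} {s : Finset ι}

theorem Finset.restrict_eq_restrict_iff_of_forall_notMem [Zero R] {u v : ι → R}
    (hu : ∀ j ∉ s, u j = 0) (hv : ∀ j ∉ s, v j = 0) : s.restrict u = s.restrict v ↔ u = v := by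
  refine ⟨fun h => funext fun j => ?_, fun h => h ▸ rfl⟩
  by_cases hj : j ∈ s
  · exact congrFun h ⟨j, hj⟩
  · rw [hu j hj, hv j hj]

theorem Finset.restrict_eq_zero_iff_of_forall_notMem [Zero R] {u : ι → R}
    (hu : ∀ j ∉ s, u j = 0) : s.restrict u = 0 ↔ u = 0 :=
  Finset.restrict_eq_restrict_iff_of_forall_notMem (v := 0) hu fun _ _ => rfl

theorem Finset.sum_eq_sum_univ_of_forall_notMem [Fintype ι] [AddCommMonoid R] {u : ι → R}
    (hu : ∀ j ∉ s, u j = 0) : ∑ i ∈ s, u i = ∑ i, u i :=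
  Finset.sum_subset s.subset_univ fun j _ hj => hu j hj

theorem Finset.sum_restrict_of_forall_notMem [Fintype ι] [AddCommMonoid R] {u : ι → R}
    (hu : ∀ j ∉ s, u j = 0) : ∑ p, s.restrict u p = ∑ i, u i :=
  (s.sum_coe_sort u).trans (Finset.sum_eq_sum_univ_of_forall_notMem hu)

theorem Finset.exists_forall_notMem_and_iff [Zero R] {P : (ι → R) → Prop} {Q : (s → R) → Prop}
    (h : ∀ u, (∀ j ∉ s, u j = 0) → (P u ↔ Q (s.restrict u))) :
    (∃ u, (∀ j ∉ s, u j = 0) ∧ P u) ↔ ∃ w, Q w := by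
  classical
  refine ⟨fun ⟨u, hu, hP⟩ => ⟨_, (h u hu).1 hP⟩, fun ⟨w, hQ⟩ => ?_⟩
  let u : ι → R := fun i => if hi : i ∈ s then w ⟨i, hi⟩ else 0
  have hu : ∀ j ∉ s, u j = 0 := fun j hj => dif_neg hj
  have hw : s.restrict u = w := funext fun p => dif_pos p.2
  exact ⟨u, hu, (h u hu).2 (hw ▸ hQ)⟩

end Restrict

namespace Matrix

variable {ι R : Type*} [Fintype ι] {s : Finset ι}

theorem submatrix_mulVec_restrict [NonUnitalNonAssocSemiring R] (A : Matrix ι ι R) {u : ι → R}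
    (hu : ∀ j ∉ s, u j = 0) :
    A.submatrix (↑) (↑) *ᵥ s.restrict u = s.restrict (A *ᵥ u) :=
  funext fun p => Finset.sum_restrict_of_forall_notMem (u := fun j => A p j * u j)
    fun j hj => by rw [hu j hj, mul_zero]

theorem mulVec_apply_eq_zero_of_forall_notMem [NonUnitalNonAssocSemiring R] {A : Matrix ι ι R}
    {u : ι → R} (hu : ∀ j ∉ s, u j = 0) (hsum : ∑ j, u j = 0) {i : ι}
    (hA : ∀ p ∈ s, ∀ q ∈ s, A i p = A i q) : (A *ᵥ u) i = 0 := by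
  rw [mulVec, dotProduct, ← Finset.sum_eq_sum_univ_of_forall_notMem (s := s)
    fun j hj => by rw [hu j hj, mul_zero]]
  rcases s.eq_empty_or_nonempty with rfl | ⟨p, hp⟩
  · exact Finset.sum_empty
  · calc ∑ j ∈ s, A i j * u j = A i p * ∑ j ∈ s, u j := by
          rw [Finset.mul_sum]
          exact Finset.sum_congr rfl fun j hj => by rw [hA j hj p hp]
      _ = 0 := by rw [Finset.sum_eq_sum_univ_of_forall_notMem hu, hsum, mul_zero]

theorem mulVec_eq_smul_iff_submatrix [Semiring R] {A : Matrix ι ι R} {u : ι → R} {c : R}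
    (hu : ∀ j ∉ s, u j = 0) (hsum : ∑ j, u j = 0)
    (hA : ∀ i ∉ s, ∀ p ∈ s, ∀ q ∈ s, A i p = A i q) :
    A *ᵥ u = c • u ↔ A.submatrix (↑) (↑) *ᵥ s.restrict u = c • s.restrict u := by
  rw [submatrix_mulVec_restrict A hu, show c • s.restrict u = s.restrict (c • u) from rfl,
    Finset.restrict_eq_restrict_iff_of_forall_notMem
      (fun i hi => mulVec_apply_eq_zero_of_forall_notMem hu hsum (hA i hi))
      (fun j hj => by rw [Pi.smul_apply, hu j hj, smul_zero])]

theorem sub_smul_one_mulVec_eq_sub_smul_iff {m : Type*} [Fintype m] [DecidableEq m] [CommRing R]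
    (B : Matrix m m R) (w : m → R) (c d : R) :
    (B - d • 1) *ᵥ w = (c - d) • w ↔ B *ᵥ w = c • w := by
  rw [sub_mulVec, smul_mulVec, one_mulVec, sub_smul, sub_left_inj]

end Matrix

theorem sec_eigenvalues_depend_on_induced_subgraph_general
    (N : ℕ) (L : Matrix (Fin N) (Fin N) ℝ)
    (hsym : L.IsSymm)
    (C : Finset (Fin N))
    (hSEC : ∀ p ∈ C, ∀ q ∈ C, ∀ j ∉ C, L p j = L q j)
    (d : ℝ)
    (lam : ℝ) :
    (∃ u : Fin N → ℝ, u ≠ 0 ∧ (∀ j ∉ C, u j = 0) ∧ (∑ i, u i = 0) ∧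
      L.mulVec u = lam • u) ↔
    (∃ w : {i // i ∈ C} → ℝ, w ≠ 0 ∧ (∑ p, w p = 0) ∧
      ((Matrix.of fun p q : {i // i ∈ C} => L p q)
        - d • (1 : Matrix {i // i ∈ C} {i // i ∈ C} ℝ)).mulVec w = (lam - d) • w) := by
  have hrows : ∀ i ∉ C, ∀ p ∈ C, ∀ q ∈ C, L i p = L i q := fun i hi p hp q hq => by
    rw [hsym.apply p i, hsym.apply q i, hSEC p hp q hq i hi]
  refine (exists_congr fun u => and_left_comm).trans
    (Finset.exists_forall_notMem_and_iff fun u hu => ?_)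
  rw [sub_smul_one_mulVec_eq_sub_smul_iff, ne_eq, ne_eq,
    Finset.restrict_eq_zero_iff_of_forall_notMem hu, Finset.sum_restrict_of_forall_notMem hu]
  exact and_congr_right fun _ => and_congr_right fun hsum =>
    mulVec_eq_smul_iff_submatrix hu hsum hrows

/-- Let C be a strong equitable cluster of L with common external degree d
and let L₀ := L' − d·I be the Laplacian of the induced subgraph. Then L has a nonzero
λ-eigenvector in U iff L₀ has a nonzero (λ − d)-eigenvector whose entries sum to zero. -/
theorem sec_eigenvalues_depend_on_induced_subgraph
    (N : ℕ) (L : Matrix (Fin N) (Fin N) ℝ)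
    (hsym : L.IsSymm) (hrow : ∀ i, ∑ j, L i j = 0)
    (C : Finset (Fin N)) (hk : 2 ≤ C.card)
    (hSEC : ∀ p ∈ C, ∀ q ∈ C, ∀ j ∉ C, L p j = L q j)
    (d : ℝ) (hd : ∀ i ∈ C, ∑ j ∈ C, L i j = d)
    (lam : ℝ) :
    (∃ u : Fin N → ℝ, u ≠ 0 ∧ (∀ j ∉ C, u j = 0) ∧ (∑ i, u i = 0) ∧
      L.mulVec u = lam • u) ↔
    (∃ w : {i // i ∈ C} → ℝ, w ≠ 0 ∧ (∑ p, w p = 0) ∧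
      ((Matrix.of fun p q : {i // i ∈ C} => L p q)
        - d • (1 : Matrix {i // i ∈ C} {i // i ∈ C} ℝ)).mulVec w = (lam - d) • w) :=
  sec_eigenvalues_depend_on_induced_subgraph_general N L hsym C hSEC d lam
end

section
/- Let L be an N×N real symmetric matrix with zero row sums and let C ⊆ {1,...,N} have k ≥ 2 elements. Then the following two statements are equivalent: (1) for every pair of indices p, q ∈ C, the transposition of p and q preserves L (i.e. its permutation matrix P satisfies P⁻¹LP = L); (2) there exists a constant c ∈ ℝ such that L_{pq} = c for all distinct p, q ∈ C (the graph induced by C is either complete with uniform weights or empty), and L_{pj} = L_{qj} for all p, q ∈ C and all j ∉ C. -/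
/-!
Conjugating by the permutation matrix of `σ` relabels `L` to `L (σ i) (σ j)`, so the left side
says that `L` is invariant under every transposition of `C`. These generate a doubly transitive
action on `C`, which makes the entries inside `C` off the diagonal constant, and the
transposition of `p` and `q` fixes every `j ∉ C`, which makes rows `p` and `q` agree outside `C`.
Conversely, under these conditions rows `p` and `q` agree after swapping columns `p` and `q`
everywhere except possibly in column `q`, i.e. except for `L p p = L q q`; that remaining entry
is forced by the equal (zero) row sums, and symmetry turns the row statement into invariance.
-/

open Equiv

theorem Fintype.apply_eq_of_sum_eq_of_forall_ne {ι M : Type*} [Fintype ι] [DecidableEq ι]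
    [AddCommGroup M] {f g : ι → M} (hsum : ∑ i, f i = ∑ i, g i) {a : ι}
    (h : ∀ i ≠ a, f i = g i) : f a = g a := by
  rw [Fintype.sum_eq_add_sum_compl a, Fintype.sum_eq_add_sum_compl a g,
    Finset.sum_congr rfl fun i hi => h i (by simpa using hi)] at hsum
  exact add_right_cancel hsum

theorem Equiv.apply_eq_of_forall_swap_apply_swap {α β : Type*} [DecidableEq α] {C : Set α}
    {f : α → α → β} (hf : ∀ a ∈ C, ∀ b ∈ C, ∀ i j, f (swap a b i) (swap a b j) = f i j)
    {p q a b : α} (hp : p ∈ C) (hq : q ∈ C) (ha : a ∈ C) (hb : b ∈ C) (hpq : p ≠ q)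
    (hab : a ≠ b) : f p q = f a b := by
  -- `swap r b * swap p a` with `r = swap p a q` sends `p ↦ a` and `q ↦ b`.
  set r := swap p a q
  have hr : r ∈ C := by
    simp only [r, swap_apply_def]; split_ifs <;> assumption
  have hra : r ≠ a := by
    simpa only [swap_apply_left] using (swap p a).injective.ne hpq.symm
  calc f p q = f (swap p a p) r := (hf p hp a ha p q).symm
    _ = f (swap r b a) (swap r b r) := by
      rw [swap_apply_left]; exact (hf r hr b hb a r).symm
    _ = f a b := by rw [swap_apply_of_ne_of_ne hra.symm hab, swap_apply_left]

namespace Matrix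

section Permutation

variable {n R : Type*} [Fintype n] [DecidableEq n] [CommRing R]

theorem inv_permMatrix (σ : Perm n) : (σ.permMatrix R)⁻¹ = σ⁻¹.permMatrix R :=
  inv_eq_left_inv <| by rw [← permMatrix_mul, mul_inv_cancel, permMatrix_one]

theorem inv_permMatrix_mul_mul_permMatrix (σ : Perm n) (L : Matrix n n R) :
    (σ.permMatrix R)⁻¹ * L * σ.permMatrix R = L.submatrix σ.symm σ.symm := by
  rw [inv_permMatrix, Perm.permMatrix, Perm.permMatrix, PEquiv.toMatrix_toPEquiv_mul,
    PEquiv.mul_toMatrix_toPEquiv, submatrix_submatrix]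
  rfl

theorem inv_permMatrix_mul_mul_permMatrix_eq_self_iff (σ : Perm n) (L : Matrix n n R) :
    (σ.permMatrix R)⁻¹ * L * σ.permMatrix R = L ↔ ∀ i j, L (σ i) (σ j) = L i j := by
  rw [inv_permMatrix_mul_mul_permMatrix]
  constructor
  · intro h i j
    simpa using (congr_fun₂ h (σ i) (σ j)).symm
  · intro h
    ext i j
    simpa using (h (σ.symm i) (σ.symm j)).symm

end Permutation

section Transposition

variable {n α : Type*} [DecidableEq n]

theorem IsSymm.apply_swap_swap {L : Matrix n n α} (hL : L.IsSymm) {p q : n}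
    (h : ∀ j, L p (Equiv.swap p q j) = L q j) (i j : n) :
    L (Equiv.swap p q i) (Equiv.swap p q j) = L i j := by
  rcases eq_or_ne i p with rfl | hip
  · simpa using (h (Equiv.swap i q j)).symm
  rcases eq_or_ne i q with rfl | hiq
  · simpa using h j
  have hi : L p i = L q i := by simpa [swap_apply_of_ne_of_ne hip hiq] using h i
  rw [swap_apply_of_ne_of_ne hip hiq, ← hL.apply, ← hL.apply i j, swap_apply_def]
  split_ifs with hjp hjq
  · rw [hjp, hi]
  · rw [hjq, hi]
  · rfl

theorem apply_swap_eq_of_sum_eq [Fintype n] [AddCommGroup α] {L : Matrix n n α}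
    {C : Finset n} {c : α} (hc : ∀ p ∈ C, ∀ q ∈ C, p ≠ q → L p q = c)
    (hout : ∀ p ∈ C, ∀ q ∈ C, ∀ j ∉ C, L p j = L q j) {p q : n} (hp : p ∈ C) (hq : q ∈ C)
    (hsum : ∑ j, L p j = ∑ j, L q j) (j : n) : L p (Equiv.swap p q j) = L q j := by
  rcases eq_or_ne p q with rfl | hpq
  · simp
  have hne : ∀ j ≠ q, L p (Equiv.swap p q j) = L q j := by
    intro j hjq
    rcases eq_or_ne j p with rfl | hjp
    · rw [swap_apply_left, hc _ hp _ hq hpq, hc _ hq _ hp hpq.symm]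
    rw [swap_apply_of_ne_of_ne hjp hjq]
    by_cases hj : j ∈ C
    · rw [hc _ hp _ hj hjp.symm, hc _ hq _ hj hjq.symm]
    · exact hout p hp q hq j hj
  rcases eq_or_ne j q with rfl | hjq
  · exact Fintype.apply_eq_of_sum_eq_of_forall_ne
      (by rwa [Equiv.sum_comp (Equiv.swap p j) (L p)]) hne
  · exact hne j hjq

end Transposition

end Matrix

theorem transpositions_preserve_iff_uniform_clique_and_sec_general
    (N : ℕ) (L : Matrix (Fin N) (Fin N) ℝ)
    (hsym : L.IsSymm) (hrow : ∀ i, ∑ j, L i j = 0)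
    (C : Finset (Fin N)) :
    (∀ p ∈ C, ∀ q ∈ C,
      ((Equiv.swap p q).permMatrix ℝ)⁻¹ * L * (Equiv.swap p q).permMatrix ℝ = L) ↔
    (∃ c : ℝ, (∀ p ∈ C, ∀ q ∈ C, p ≠ q → L p q = c) ∧
      (∀ p ∈ C, ∀ q ∈ C, ∀ j ∉ C, L p j = L q j)) := by
  simp only [Matrix.inv_permMatrix_mul_mul_permMatrix_eq_self_iff]
  constructor
  · intro h
    obtain ⟨c, hc⟩ : ∃ c, ∀ p ∈ C, ∀ q ∈ C, p ≠ q → L p q = c := by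
      by_cases hC : ∃ a ∈ C, ∃ b ∈ C, a ≠ b
      · obtain ⟨a, ha, b, hb, hab⟩ := hC
        exact ⟨L a b, fun p hp q hq hpq =>
          apply_eq_of_forall_swap_apply_swap h hp hq ha hb hpq hab⟩
      · push Not at hC
        exact ⟨0, fun p hp q hq hpq => absurd (hC p hp q hq) hpq⟩
    refine ⟨c, hc, fun p hp q hq j hj => ?_⟩
    simpa [swap_apply_of_ne_of_ne (ne_of_mem_of_not_mem hp hj).symm
        (ne_of_mem_of_not_mem hq hj).symm] using (h p hp q hq p j).symm
  · rintro ⟨c, hc, hout⟩ p hp q hq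
    exact hsym.apply_swap_swap
      (Matrix.apply_swap_eq_of_sum_eq hc hout hp hq (by rw [hrow, hrow]))

/-- For a real symmetric N×N matrix L with zero row sums and a subset C
with k ≥ 2 elements: every transposition of two indices of C preserves L iff the
graph induced by C is complete with uniform weights or empty (L p q = c for all
distinct p, q ∈ C) and C is a strong equitable cluster of L. -/
theorem transpositions_preserve_iff_uniform_clique_and_sec
    (N : ℕ) (L : Matrix (Fin N) (Fin N) ℝ)
    (hsym : L.IsSymm) (hrow : ∀ i, ∑ j, L i j = 0)
    (C : Finset (Fin N)) (hk : 2 ≤ C.card) :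
    (∀ p ∈ C, ∀ q ∈ C,
      ((Equiv.swap p q).permMatrix ℝ)⁻¹ * L * (Equiv.swap p q).permMatrix ℝ = L) ↔
    (∃ c : ℝ, (∀ p ∈ C, ∀ q ∈ C, p ≠ q → L p q = c) ∧
      (∀ p ∈ C, ∀ q ∈ C, ∀ j ∉ C, L p j = L q j)) :=
  transpositions_preserve_iff_uniform_clique_and_sec_general N L hsym hrow C
end

section
/- Let L be an N×N real symmetric matrix, let j ≠ l be two indices in {1,...,N}, and suppose the transposition exchanging j and l preserves L (its permutation matrix P satisfies P⁻¹LP = L). If u ∈ ℝ^N satisfies Lu = λu for some λ ∈ ℝ and u_j ≠ u_l, then the vector e ∈ ℝ^N with e_j = 1, e_l = −1 and all other entries zero also satisfies Le = λe. -/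
/-!
The swap `σ = (j l)` commutes with `L`, so `u ∘ σ` is again a `λ`-eigenvector, and
`u - u ∘ σ = (u j - u l) • e`. Since `u j ≠ u l`, `e` is a multiple of a difference of two
`λ`-eigenvectors.
-/

open Matrix

namespace Matrix

variable {n R : Type*} [Fintype n] [CommRing R]

theorem mulVec_mulVec_eq_smul_of_commute {A B : Matrix n n R} {v : n → R} {c : R}
    (hBA : Commute B A) (hv : A *ᵥ v = c • v) : A *ᵥ (B *ᵥ v) = c • (B *ᵥ v) := by
  rw [mulVec_mulVec, ← hBA.eq, ← mulVec_mulVec, hv, mulVec_smul]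

variable [DecidableEq n]

theorem isUnit_det_permMatrix (σ : Equiv.Perm n) : IsUnit (σ.permMatrix R).det := by
  rw [det_permutation]
  exact (Equiv.Perm.sign σ).isUnit.map (Int.castRingHom R)

theorem commute_of_nonsing_inv_mul_mul_eq {A P : Matrix n n R} (hP : IsUnit P.det)
    (h : P⁻¹ * A * P = A) : Commute P A :=
  calc P * A = P * (P⁻¹ * A * P) := by rw [h]
    _ = A * P := by rw [← Matrix.mul_assoc, ← Matrix.mul_assoc, mul_nonsing_inv _ hP, one_mul]

end Matrix

theorem sub_comp_swap_eq_smul {α M : Type*} [DecidableEq α] [Ring M] (u : α → M) (j l : α) :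
    u - u ∘ Equiv.swap j l =
      (u j - u l) • fun p => if p = j then 1 else if p = l then -1 else 0 := by
  ext p
  rcases eq_or_ne p j with rfl | hpj
  · simp
  rcases eq_or_ne p l with rfl | hpl
  · simp [hpj]
  · simp [hpj, hpl, Equiv.swap_apply_of_ne_of_ne hpj hpl]

theorem swap_invariance_gives_difference_eigenvector_general
    (N : ℕ) (L : Matrix (Fin N) (Fin N) ℝ)
    (j l : Fin N)
    (hswap : ((Equiv.swap j l).permMatrix ℝ)⁻¹ * L * (Equiv.swap j l).permMatrix ℝ = L)
    (u : Fin N → ℝ) (lam : ℝ) (hu : L.mulVec u = lam • u) (hne : u j ≠ u l) :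
    L.mulVec (fun p : Fin N => (if p = j then 1 else if p = l then -1 else 0 : ℝ))
      = lam • (fun p : Fin N => (if p = j then 1 else if p = l then -1 else 0 : ℝ)) := by
  set e : Fin N → ℝ := fun p => if p = j then 1 else if p = l then -1 else 0
  have hcomm : Commute ((Equiv.swap j l).permMatrix ℝ) L :=
    commute_of_nonsing_inv_mul_mul_eq (isUnit_det_permMatrix _) hswap
  have hu_swap : L *ᵥ (u ∘ Equiv.swap j l) = lam • (u ∘ Equiv.swap j l) := by
    simpa only [permMatrix_mulVec] using mulVec_mulVec_eq_smul_of_commute hcomm hu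
  have he : e = (u j - u l)⁻¹ • (u - u ∘ Equiv.swap j l) := by
    rw [sub_comp_swap_eq_smul, smul_smul, inv_mul_cancel₀ (sub_ne_zero.mpr hne), one_smul]
  rw [he, mulVec_smul, mulVec_sub, hu, hu_swap, ← smul_sub, smul_comm]

/-- If the transposition of j and l preserves a real symmetric matrix L,
and u is a λ-eigenvector of L with u j ≠ u l, then the vector e with e_j = 1,
e_l = −1 and all other entries 0 is also a λ-eigenvector of L. -/
theorem swap_invariance_gives_difference_eigenvector
    (N : ℕ) (L : Matrix (Fin N) (Fin N) ℝ) (hsym : L.IsSymm)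
    (j l : Fin N) (hjl : j ≠ l)
    (hswap : ((Equiv.swap j l).permMatrix ℝ)⁻¹ * L * (Equiv.swap j l).permMatrix ℝ = L)
    (u : Fin N → ℝ) (lam : ℝ) (hu : L.mulVec u = lam • u) (hne : u j ≠ u l) :
    L.mulVec (fun p : Fin N => (if p = j then 1 else if p = l then -1 else 0 : ℝ))
      = lam • (fun p : Fin N => (if p = j then 1 else if p = l then -1 else 0 : ℝ)) :=
  swap_invariance_gives_difference_eigenvector_general N L j l hswap u lam hu hne
end

section
/- Let L be an N×N real symmetric matrix with zero row sums, let v₁, ..., v_N be an orthonormal basis of ℝ^N consisting of eigenvectors of L with v₁ = (1/√N)(1,1,...,1)ᵀ, let C ⊆ {1,...,N} have k ≥ 2 elements, and let S be a spectral block of k−1 of these eigenvectors localized at C. Then for every pair of distinct indices p, q ∈ C, one has Σ_{v ∈ S} (v_p − v_q)² = 2, where v_p and v_q denote the p-th and q-th entries of the eigenvector v. -/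
open Matrix

/-!
The matrix whose rows are the orthonormal vectors `vᵢ` is orthogonal, so its columns are
orthonormal as well. For `p ≠ q` this gives `∑ᵢ (vᵢ p - vᵢ q)² = 1 + 1 - 2 · 0 = 2` over
the whole basis, and the eigenvectors outside the block contribute nothing to this sum because
they are constant on `C`.
-/

section OrthonormalRows

variable {ι R : Type*} [Fintype ι] [DecidableEq ι] [CommRing R] {v : ι → ι → R}

theorem sum_mul_eq_ite_of_dotProduct_eq_ite
    (horth : ∀ i j, v i ⬝ᵥ v j = if i = j then 1 else 0) (p q : ι) :
    ∑ i, v i p * v i q = if p = q then 1 else 0 := by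
  have hrows : of v * (of v)ᵀ = 1 := by
    ext i j
    simpa [mul_apply, one_apply, dotProduct] using horth i j
  have hcols : (of v)ᵀ * of v = 1 := mul_eq_one_comm.mp hrows
  simpa [mul_apply, one_apply] using congrFun (congrFun hcols p) q

theorem sum_sub_sq_eq_two_of_dotProduct_eq_ite
    (horth : ∀ i j, v i ⬝ᵥ v j = if i = j then 1 else 0) {p q : ι} (hpq : p ≠ q) :
    ∑ i, (v i p - v i q) ^ 2 = 2 := by
  have hexpand : ∀ i, (v i p - v i q) ^ 2 = v i p * v i p + v i q * v i q - 2 * (v i p * v i q) :=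
    fun i => by ring
  simp only [hexpand, Finset.sum_sub_distrib, Finset.sum_add_distrib, ← Finset.mul_sum,
    sum_mul_eq_ite_of_dotProduct_eq_ite horth, if_neg hpq]
  norm_num

end OrthonormalRows

theorem spectral_block_entry_two_general
    (N : ℕ)
    (C : Finset (Fin N))
    (v : Fin N → (Fin N → ℝ)) (S : Finset (Fin N))
    (horth : ∀ i j, v i ⬝ᵥ v j = if i = j then 1 else 0)
    (hconst : ∀ i ∉ S, ∀ p ∈ C, ∀ q ∈ C, v i p = v i q) :
    ∀ p ∈ C, ∀ q ∈ C, p ≠ q → ∑ i ∈ S, (v i p - v i q) ^ 2 = 2 := by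
  intro p hp q hq hpq
  have hS : ∑ i ∈ S, (v i p - v i q) ^ 2 = ∑ i, (v i p - v i q) ^ 2 :=
    Finset.sum_subset S.subset_univ fun i _ hi => by
      rw [hconst i hi p hp q hq, sub_self, sq, zero_mul]
  rw [hS, sum_sub_sq_eq_two_of_dotProduct_eq_ite horth hpq]

/-- If S is a spectral block of k−1 eigenvectors localized at a k-element
set C (within an orthonormal eigenbasis of L whose first vector is (1/√N)(1,...,1)ᵀ),
then ∑_{v ∈ S} (v_p − v_q)² = 2 for all distinct p, q ∈ C. -/
theorem spectral_block_entry_two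
    (N : ℕ) [NeZero N] (L : Matrix (Fin N) (Fin N) ℝ)
    (hsym : L.IsSymm) (hrow : ∀ i, ∑ j, L i j = 0)
    (C : Finset (Fin N)) (hk : 2 ≤ C.card)
    (v : Fin N → (Fin N → ℝ)) (μ : Fin N → ℝ) (S : Finset (Fin N))
    (horth : ∀ i j, v i ⬝ᵥ v j = if i = j then 1 else 0)
    (heig : ∀ i, L.mulVec (v i) = μ i • v i)
    (hv0 : v 0 = fun _ => 1 / Real.sqrt N)
    (hcard : S.card = C.card - 1) (h0S : (0 : Fin N) ∉ S)
    (hloc : ∀ i ∈ S, ∀ j ∉ C, v i j = 0)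
    (hconst : ∀ i ∉ S, ∀ p ∈ C, ∀ q ∈ C, v i p = v i q) :
    ∀ p ∈ C, ∀ q ∈ C, p ≠ q → ∑ i ∈ S, (v i p - v i q) ^ 2 = 2 :=
  spectral_block_entry_two_general N C v S horth hconst
end
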